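/- arXiv:1401.3811 — 2 statements merged into one kernel-verified Lean document; each statement's English description precedes it below -/
import Mathlib

section
/- If a chord diagram contains a trigon of type C and every chord other than the three trigon chords has both of its endpoints in a single outer arc of the trigon, then the reductivity of the diagram is at most 1. (Step in the proof of the paper's Lemma 2.5: if the arcs l, m, n around a type C trigon have no mutual crossings, then the curve is a connected sum of a trefoil and spherical curves, whose reductivity is one or zero.) -/
/-!
Chord diagrams modeling spherical curves (Gauss diagrams).

A chord diagram with `n` chords is a fixed-point-free involution `f` on the
cyclically ordered set `ZMod (2*n)`; the unordered pairs `{a, f a}` are its chords.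
-/

namespace SphericalCurveReductivity

/-- `x` lies in the open arc from `a` to `b` (in the positive cyclic direction). -/
def InArc {N : ℕ} (a b x : ZMod N) : Prop :=
  0 < (x - a).val ∧ (x - a).val < (b - a).val

/-- The chord `{a, f a}` crosses the chord `{c, f c}`: the four endpoints are pairwise
distinct and exactly one of `c`, `f c` lies in the open arc from `a` to `f a`. -/
def Crosses {N : ℕ} (f : ZMod N → ZMod N) (a c : ZMod N) : Prop :=
  c ≠ a ∧ c ≠ f a ∧ f c ≠ a ∧ f c ≠ f a ∧
    Xor' (InArc a (f a) c) (InArc a (f a) (f c))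

/-- A chord diagram is reducible if some chord crosses no other chord. -/
def Reducible {N : ℕ} (f : ZMod N → ZMod N) : Prop :=
  ∃ a, ∀ c, ¬ Crosses f a c

/-- The embedding of the points of the new chord diagram (after the I-move at the
chord `{a, b}`) into the old one: the points `a`, `b` are deleted and the points of
the open arc from `a` to `b` appear in reversed order, followed by the points of the
open arc from `b` to `a` in their original order. -/
def imoveEmb (n : ℕ) (a b : ZMod (2 * n)) (k : ZMod (2 * (n - 1))) : ZMod (2 * n) :=
  if k.val + 1 < (b - a).val then a + (((b - a).val - 1 - k.val : ℕ) : ZMod (2 * n))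
  else a + ((k.val + 2 : ℕ) : ZMod (2 * n))

/-- The induced map of points of the old chord diagram (other than `a`, `b`) to points
of the new chord diagram after the I-move at the chord `{a, b}`; inverse to `imoveEmb`. -/
def imoveProj (n : ℕ) (a b : ZMod (2 * n)) (x : ZMod (2 * n)) : ZMod (2 * (n - 1)) :=
  if (x - a).val < (b - a).val then (((b - a).val - 1 - (x - a).val : ℕ) : ZMod (2 * (n - 1)))
  else (((x - a).val - 2 : ℕ) : ZMod (2 * (n - 1)))

/-- The I-move (inverse-half-twisted splice) at the chord `{a, f a}`: delete the two
points `a`, `f a` and reverse the order of the points along the open arc from `a`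
to `f a`, producing a chord diagram with `n - 1` chords. -/
def IMove {n : ℕ} (f : ZMod (2 * n) → ZMod (2 * n)) (a : ZMod (2 * n))
    (k : ZMod (2 * (n - 1))) : ZMod (2 * (n - 1)) :=
  imoveProj n a (f a) (f (imoveEmb n a (f a) k))

/-- `ReductivityLe m f` : the reductivity of the chord diagram `f` is at most `m`,
i.e. at most `m` successive I-moves transform `f` into a reducible chord diagram. -/
def ReductivityLe : ℕ → ∀ {n : ℕ}, (ZMod (2 * n) → ZMod (2 * n)) → Prop
  | 0, _, f => Reducible f
  | m + 1, n, f => Reducible f ∨ ∃ a : ZMod (2 * n), ReductivityLe m (IMove f a)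

/-- An incoherent bigon: the two chords `{i, j}` and `{i+1, j+1}` with the four
endpoints pairwise distinct. -/
def IncoherentBigon {N : ℕ} (f : ZMod N → ZMod N) (i j : ZMod N) : Prop :=
  f i = j ∧ f (i + 1) = j + 1 ∧ ({i, j, i + 1, j + 1} : Finset (ZMod N)).card = 4

/-- A coherent bigon: the two chords `{i, j+1}` and `{i+1, j}` with the four
endpoints pairwise distinct. -/
def CoherentBigon {N : ℕ} (f : ZMod N → ZMod N) (i j : ZMod N) : Prop :=
  f i = j + 1 ∧ f (i + 1) = j ∧ ({i, j, i + 1, j + 1} : Finset (ZMod N)).card = 4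

/-- The six endpoints of a trigon with corners at the consecutive pairs
`(i, i+1)`, `(j, j+1)`, `(k, k+1)`. -/
def trigonSet {N : ℕ} (i j k : ZMod N) : Finset (ZMod N) :=
  {i, i + 1, j, j + 1, k, k + 1}

/-- A trigon: three chords whose six endpoints form the three pairs of cyclically
consecutive points `(i, i+1)`, `(j, j+1)`, `(k, k+1)` (pairwise distinct), such that no
chord joins the two points of one of these pairs, so that the three chords connect the
three consecutive pairs in a triangle. -/
def Trigon {N : ℕ} (f : ZMod N → ZMod N) (i j k : ZMod N) : Prop :=
  (trigonSet i j k).card = 6 ∧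
  (∀ x ∈ trigonSet i j k, f x ∈ trigonSet i j k) ∧
  f i ≠ i + 1 ∧ f j ≠ j + 1 ∧ f k ≠ k + 1

/-- A representative point of the third chord of a trigon (the chord not containing
`i` nor `i + 1`). -/
def trigonThird {N : ℕ} (f : ZMod N → ZMod N) (i j : ZMod N) : ZMod N :=
  if j = f i ∨ j = f (i + 1) then j + 1 else j

/-- Exactly two of three propositions hold. -/
def ExactlyTwo (p q r : Prop) : Prop :=
  (p ∧ q ∧ ¬r) ∨ (p ∧ ¬q ∧ r) ∨ (¬p ∧ q ∧ r)

/-- Exactly one of three propositions holds. -/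
def ExactlyOne (p q r : Prop) : Prop :=
  (p ∧ ¬q ∧ ¬r) ∨ (¬p ∧ q ∧ ¬r) ∨ (¬p ∧ ¬q ∧ r)

/-- Trigon of type A: exactly two of the three pairs of its chords cross. -/
def TrigonA {N : ℕ} (f : ZMod N → ZMod N) (i j k : ZMod N) : Prop :=
  Trigon f i j k ∧
    ExactlyTwo (Crosses f i (i + 1)) (Crosses f i (trigonThird f i j))
      (Crosses f (i + 1) (trigonThird f i j))

/-- Trigon of type B: exactly one pair of its chords crosses. -/
def TrigonB {N : ℕ} (f : ZMod N → ZMod N) (i j k : ZMod N) : Prop :=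
  Trigon f i j k ∧
    ExactlyOne (Crosses f i (i + 1)) (Crosses f i (trigonThird f i j))
      (Crosses f (i + 1) (trigonThird f i j))

/-- Trigon of type C: its three chords pairwise cross. -/
def TrigonC {N : ℕ} (f : ZMod N → ZMod N) (i j k : ZMod N) : Prop :=
  Trigon f i j k ∧
    Crosses f i (i + 1) ∧ Crosses f i (trigonThird f i j) ∧
      Crosses f (i + 1) (trigonThird f i j)

/-- Trigon of type D: no two of its chords cross. -/
def TrigonD {N : ℕ} (f : ZMod N → ZMod N) (i j k : ZMod N) : Prop :=
  Trigon f i j k ∧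
    ¬ Crosses f i (i + 1) ∧ ¬ Crosses f i (trigonThird f i j) ∧
      ¬ Crosses f (i + 1) (trigonThird f i j)


private lemma zval_sub {N : ℕ} [NeZero N] (s t : ℕ) (hs : s < N) (ht : t < N) :
    ((s : ZMod N) - (t : ZMod N)).val = if t ≤ s then s - t else s + N - t := by
  split_ifs with h
  · have e : ((s : ZMod N) - (t : ZMod N)) = ((s - t : ℕ) : ZMod N) := by
      rw [Nat.cast_sub h]
    rw [e, ZMod.val_cast_of_lt (by omega)]
  · have e : ((s : ZMod N) - (t : ZMod N)) = ((s + N - t : ℕ) : ZMod N) := by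
      rw [Nat.cast_sub (by omega : t ≤ s + N), Nat.cast_add, ZMod.natCast_self, add_zero]
    rw [e, ZMod.val_cast_of_lt (by omega)]

private lemma inArc_iff {N : ℕ} [NeZero N] (i : ZMod N) (s t u : ℕ) (hs : s < N) (ht : t < N)
    (hu : u < N) :
    (InArc (i + (s : ZMod N)) (i + (t : ZMod N)) (i + (u : ZMod N)) ↔
      if s ≤ t then (s < u ∧ u < t) else (s < u ∨ u < t)) := by
  unfold InArc
  have e1 : (i + (u : ZMod N)) - (i + (s : ZMod N)) = (u : ZMod N) - s := by ring
  have e2 : (i + (t : ZMod N)) - (i + (s : ZMod N)) = (t : ZMod N) - s := by ring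
  rw [e1, e2, zval_sub u s hu hs, zval_sub t s ht hs]
  split_ifs <;> omega

private lemma card_le_five {α : Type*} [DecidableEq α] (a b c d e : α) :
    ({a, b, c, d, e} : Finset α).card ≤ 5 := by
  refine le_trans (Finset.card_insert_le _ _) (Nat.succ_le_succ ?_)
  refine le_trans (Finset.card_insert_le _ _) (Nat.succ_le_succ ?_)
  refine le_trans (Finset.card_insert_le _ _) (Nat.succ_le_succ ?_)
  refine le_trans (Finset.card_insert_le _ _) (Nat.succ_le_succ ?_)
  simp

/-- If a chord diagram contains a trigon of type C whose corner pairs `(i,i+1)`,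
`(j,j+1)`, `(k,k+1)` occur in this cyclic order, and every chord other than the three
trigon chords has both of its endpoints in a single outer arc of the trigon, then the
reductivity of the diagram is at most 1 (step in the proof of Lemma 2.5: the curve is a
connected sum of a trefoil and spherical curves). -/
theorem trigonC_no_mutual_crossing_reductivity_le_one {n : ℕ} (hn : 1 ≤ n)
    (f : ZMod (2 * n) → ZMod (2 * n)) (hinv : Function.Involutive f)
    (hfree : ∀ a, f a ≠ a) (i j k : ZMod (2 * n)) (ht : TrigonC f i j k)
    (hord : InArc i k j)
    (hloc : ∀ x : ZMod (2 * n), x ∉ trigonSet i j k →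
      (InArc (i + 1) j x ∧ InArc (i + 1) j (f x)) ∨
      (InArc (j + 1) k x ∧ InArc (j + 1) k (f x)) ∨
      (InArc (k + 1) i x ∧ InArc (k + 1) i (f x))) :
    ReductivityLe 1 f := by
  haveI : NeZero (2 * n) := ⟨by omega⟩
  obtain ⟨⟨hcard, hmap, hfi1, hfj1, hfk1⟩, hc1, hc2, hc3⟩ := ht
  obtain ⟨hp0, hpq⟩ := hord
  set p := (j - i).val with hp_def
  set q := (k - i).val with hq_def
  have hpN : p < 2 * n := ZMod.val_lt _
  have hqN : q < 2 * n := ZMod.val_lt _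
  have hswap : ∀ x y, f x = y → f y = x := fun x y h => by rw [← h, hinv]
  have hj : j = i + (p : ZMod (2 * n)) := by
    rw [hp_def, ZMod.natCast_rightInverse (j - i)]; ring
  have hk : k = i + (q : ZMod (2 * n)) := by
    rw [hq_def, ZMod.natCast_rightInverse (k - i)]; ring
  have F0 : i + ((0 : ℕ) : ZMod (2 * n)) = i := by simp
  have F1 : i + ((1 : ℕ) : ZMod (2 * n)) = i + 1 := by norm_num
  have Fp : i + ((p : ℕ) : ZMod (2 * n)) = j := hj.symm
  have Fp1 : i + ((p + 1 : ℕ) : ZMod (2 * n)) = j + 1 := by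
    rw [Nat.cast_add, Nat.cast_one, ← add_assoc, Fp]
  have Fq : i + ((q : ℕ) : ZMod (2 * n)) = k := hk.symm
  have Fq1 : i + ((q + 1 : ℕ) : ZMod (2 * n)) = k + 1 := by
    rw [Nat.cast_add, Nat.cast_one, ← add_assoc, Fq]
  have hcinj : ∀ s t : ℕ, s < 2 * n → t < 2 * n →
      (s : ZMod (2 * n)) = (t : ZMod (2 * n)) → s = t := by
    intro s t hs ht h
    have := congrArg ZMod.val h
    rwa [ZMod.val_cast_of_lt hs, ZMod.val_cast_of_lt ht] at this
  have PNE : ∀ s t : ℕ, s < 2 * n → t < 2 * n → s ≠ t →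
      i + (s : ZMod (2 * n)) ≠ i + (t : ZMod (2 * n)) := by
    intro s t hs ht hst h
    exact hst (hcinj s t hs ht (add_left_cancel h))
  have hsub5 : ∀ (a b c d e : ZMod (2 * n)), trigonSet i j k ⊆ {a, b, c, d, e} → False := by
    intro a b c d e hsub
    have h1 := Finset.card_le_card hsub
    have h2 := card_le_five a b c d e
    omega
  have ni1j : i + 1 ≠ j := by
    intro h
    apply hsub5 i (i + 1) (j + 1) k (k + 1)
    intro x hx
    simp only [trigonSet, Finset.mem_insert, Finset.mem_singleton] at hx
    simp only [Finset.mem_insert, Finset.mem_singleton]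
    rcases hx with rfl | rfl | rfl | rfl | rfl | rfl <;> simp [h]
  have nj1k : j + 1 ≠ k := by
    intro h
    apply hsub5 i (i + 1) j k (k + 1)
    intro x hx
    simp only [trigonSet, Finset.mem_insert, Finset.mem_singleton] at hx
    simp only [Finset.mem_insert, Finset.mem_singleton]
    rcases hx with rfl | rfl | rfl | rfl | rfl | rfl <;> simp [h]
  have nk1i : k + 1 ≠ i := by
    intro h
    apply hsub5 i (i + 1) j (j + 1) k
    intro x hx
    simp only [trigonSet, Finset.mem_insert, Finset.mem_singleton] at hx
    simp only [Finset.mem_insert, Finset.mem_singleton]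
    rcases hx with rfl | rfl | rfl | rfl | rfl | rfl <;> simp [h]
  have hp1 : p ≠ 1 := fun h => ni1j (by rw [← F1, ← Fp, h])
  have hp2 : 2 ≤ p := by omega
  have hq2 : p + 2 ≤ q := by
    have : q ≠ p + 1 := fun h => nj1k (by rw [← Fp1, ← Fq, h])
    omega
  have hqN2 : q + 1 < 2 * n := by
    have : q + 1 ≠ 2 * n := by
      intro h
      apply nk1i
      rw [← Fq1, h]
      simp
    omega
  have hn6 : 6 ≤ 2 * n := by omega
  have nii1 : i ≠ i + 1 := by
    have h := PNE 0 1 (by omega) (by omega) (by omega)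
    rwa [F0, F1] at h
  have nij : i ≠ j := by
    have h := PNE 0 p (by omega) (by omega) (by omega)
    rwa [F0, Fp] at h
  have nij1 : i ≠ j + 1 := by
    have h := PNE 0 (p + 1) (by omega) (by omega) (by omega)
    rwa [F0, Fp1] at h
  have nik : i ≠ k := by
    have h := PNE 0 q (by omega) (by omega) (by omega)
    rwa [F0, Fq] at h
  have nik1 : i ≠ k + 1 := by
    have h := PNE 0 (q + 1) (by omega) (by omega) (by omega)
    rwa [F0, Fq1] at h
  have ni1j1 : i + 1 ≠ j + 1 := by
    have h := PNE 1 (p + 1) (by omega) (by omega) (by omega)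
    rwa [F1, Fp1] at h
  have ni1k : i + 1 ≠ k := by
    have h := PNE 1 q (by omega) (by omega) (by omega)
    rwa [F1, Fq] at h
  have ni1k1 : i + 1 ≠ k + 1 := by
    have h := PNE 1 (q + 1) (by omega) (by omega) (by omega)
    rwa [F1, Fq1] at h
  have njj1 : j ≠ j + 1 := by
    have h := PNE p (p + 1) (by omega) (by omega) (by omega)
    rwa [Fp, Fp1] at h
  have njk : j ≠ k := by
    have h := PNE p q (by omega) (by omega) (by omega)
    rwa [Fp, Fq] at h
  have njk1 : j ≠ k + 1 := by
    have h := PNE p (q + 1) (by omega) (by omega) (by omega)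
    rwa [Fp, Fq1] at h
  have nj1k1 : j + 1 ≠ k + 1 := by
    have h := PNE (p + 1) (q + 1) (by omega) (by omega) (by omega)
    rwa [Fp1, Fq1] at h
  have nkk1 : k ≠ k + 1 := by
    have h := PNE q (q + 1) (by omega) (by omega) (by omega)
    rwa [Fq, Fq1] at h
  have memset : ∀ x, x ∈ trigonSet i j k →
      (x = i ∨ x = i + 1 ∨ x = j ∨ x = j + 1 ∨ x = k ∨ x = k + 1) := by
    intro x hx
    simpa [trigonSet, Finset.mem_insert, Finset.mem_singleton] using hx
  have mi := memset _ (hmap i (by simp [trigonSet]))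
  have mi1 := memset _ (hmap (i + 1) (by simp [trigonSet]))
  have mj := memset _ (hmap j (by simp [trigonSet]))
  have mj1 := memset _ (hmap (j + 1) (by simp [trigonSet]))
  have mk := memset _ (hmap k (by simp [trigonSet]))
  have hstruct : f i = j + 1 ∧ f (i + 1) = k ∧ f j = k + 1 := by
    rcases mi with h | h | h | h | h | h
    · exact absurd h (hfree i)
    · exact absurd h hfi1
    · -- f i = j
      have hfj' : f j = i := hswap _ _ h
      rcases mi1 with h' | h' | h' | h' | h' | h'
      · exact absurd (hswap _ _ h') hfi1
      · exact absurd h' (hfree _)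
      · exact absurd (hfj'.symm.trans (hswap _ _ h')) nii1
      · -- f (i+1) = j + 1 : forces f k = k + 1
        have hfj1' := hswap _ _ h'
        rcases mk with hk' | hk' | hk' | hk' | hk' | hk'
        · exact absurd (h.symm.trans (hswap _ _ hk')) njk
        · exact absurd (h'.symm.trans (hswap _ _ hk')) nj1k
        · exact absurd (hfj'.symm.trans (hswap _ _ hk')) nik
        · exact absurd (hfj1'.symm.trans (hswap _ _ hk')) ni1k
        · exact absurd hk' (hfree k)
        · exact absurd hk' hfk1
      · -- f (i+1) = k : forces f (j+1) = k + 1, killed by hc2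
        have hfk' := hswap _ _ h'
        have hfj1'' : f (j + 1) = k + 1 := by
          rcases mj1 with h2 | h2 | h2 | h2 | h2 | h2
          · exact absurd ((hswap _ _ h2).symm.trans h).symm njj1
          · exact absurd ((hswap _ _ h2).symm.trans h') nj1k
          · exact absurd (hfj'.symm.trans (hswap _ _ h2)) nij1
          · exact absurd h2 (hfree _)
          · exact absurd (hfk'.symm.trans (hswap _ _ h2)) ni1j1
          · exact h2
        have hT : trigonThird f i j = j + 1 := by
          unfold trigonThird
          rw [if_pos (Or.inl h.symm)]
        obtain ⟨-, -, -, -, hx⟩ := hc2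
        rw [hT, h, hfj1''] at hx
        have A : ¬ InArc i j (j + 1) := by
          have hA := inArc_iff i 0 p (p + 1) (by omega) hpN (by omega)
          rw [F0, Fp, Fp1] at hA
          rw [hA]
          split_ifs <;> omega
        have B : ¬ InArc i j (k + 1) := by
          have hB := inArc_iff i 0 p (q + 1) (by omega) hpN (by omega)
          rw [F0, Fp, Fq1] at hB
          rw [hB]
          split_ifs <;> omega
        rcases hx with ⟨h1, -⟩ | ⟨h1, -⟩
        · exact absurd h1 A
        · exact absurd h1 B
      · -- f (i+1) = k + 1 : forces f (j+1) = k, killed by hc2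
        have hfk1' := hswap _ _ h'
        have hfj1'' : f (j + 1) = k := by
          rcases mj1 with h2 | h2 | h2 | h2 | h2 | h2
          · exact absurd ((hswap _ _ h2).symm.trans h).symm njj1
          · exact absurd ((hswap _ _ h2).symm.trans h') nj1k1
          · exact absurd (hfj'.symm.trans (hswap _ _ h2)) nij1
          · exact absurd h2 (hfree _)
          · exact h2
          · exact absurd (hfk1'.symm.trans (hswap _ _ h2)) ni1j1
        have hT : trigonThird f i j = j + 1 := by
          unfold trigonThird
          rw [if_pos (Or.inl h.symm)]
        obtain ⟨-, -, -, -, hx⟩ := hc2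
        rw [hT, h, hfj1''] at hx
        have A : ¬ InArc i j (j + 1) := by
          have hA := inArc_iff i 0 p (p + 1) (by omega) hpN (by omega)
          rw [F0, Fp, Fp1] at hA
          rw [hA]
          split_ifs <;> omega
        have B : ¬ InArc i j k := by
          have hB := inArc_iff i 0 p q (by omega) hpN hqN
          rw [F0, Fp, Fq] at hB
          rw [hB]
          split_ifs <;> omega
        rcases hx with ⟨h1, -⟩ | ⟨h1, -⟩
        · exact absurd h1 A
        · exact absurd h1 B
    · -- f i = j + 1
      have hfj1' : f (j + 1) = i := hswap _ _ h
      rcases mi1 with h' | h' | h' | h' | h' | h'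
      · exact absurd (hswap _ _ h') hfi1
      · exact absurd h' (hfree _)
      · -- f (i+1) = j : forces f k = k + 1
        have hfj' := hswap _ _ h'
        rcases mk with hk' | hk' | hk' | hk' | hk' | hk'
        · exact absurd (h.symm.trans (hswap _ _ hk')) nj1k
        · exact absurd (h'.symm.trans (hswap _ _ hk')) njk
        · exact absurd (hfj'.symm.trans (hswap _ _ hk')) ni1k
        · exact absurd (hfj1'.symm.trans (hswap _ _ hk')) nik
        · exact absurd hk' (hfree k)
        · exact absurd hk' hfk1
      · exact absurd (hfj1'.symm.trans (hswap _ _ h')) nii1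
      · -- TARGET : f (i+1) = k
        have hfk' := hswap _ _ h'
        refine ⟨h, h', ?_⟩
        rcases mj with h2 | h2 | h2 | h2 | h2 | h2
        · exact absurd (h.symm.trans (hswap _ _ h2)).symm njj1
        · exact absurd (h'.symm.trans (hswap _ _ h2)).symm njk
        · exact absurd h2 (hfree _)
        · exact absurd h2 hfj1
        · exact absurd (hfk'.symm.trans (hswap _ _ h2)) ni1j
        · exact h2
      · -- f (i+1) = k + 1 : forces f j = k, killed by hc3
        have hfk1' := hswap _ _ h'
        have hfj'' : f j = k := by
          rcases mj with h2 | h2 | h2 | h2 | h2 | h2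
          · exact absurd (h.symm.trans (hswap _ _ h2)).symm njj1
          · exact absurd (h'.symm.trans (hswap _ _ h2)).symm njk1
          · exact absurd h2 (hfree _)
          · exact absurd h2 hfj1
          · exact h2
          · exact absurd (hfk1'.symm.trans (hswap _ _ h2)) ni1j
        have hT : trigonThird f i j = j := by
          unfold trigonThird
          rw [if_neg]
          push_neg
          refine ⟨?_, ?_⟩
          · rw [h]; exact njj1
          · rw [h']; exact njk1
        obtain ⟨-, -, -, -, hx⟩ := hc3
        rw [hT, h', hfj''] at hx
        have A : InArc (i + 1) (k + 1) j := by
          have hA := inArc_iff i 1 (q + 1) p (by omega) (by omega) hpN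
          rw [F1, Fq1, Fp] at hA
          rw [hA]
          split_ifs <;> omega
        have B : InArc (i + 1) (k + 1) k := by
          have hB := inArc_iff i 1 (q + 1) q (by omega) (by omega) hqN
          rw [F1, Fq1, Fq] at hB
          rw [hB]
          split_ifs <;> omega
        rcases hx with ⟨-, h2⟩ | ⟨-, h2⟩
        · exact absurd B h2
        · exact absurd A h2
    · -- f i = k
      have hfk' : f k = i := hswap _ _ h
      rcases mi1 with h' | h' | h' | h' | h' | h'
      · exact absurd (hswap _ _ h') hfi1
      · exact absurd h' (hfree _)
      · -- f (i+1) = j : killed by hc1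
        obtain ⟨-, -, -, -, hx⟩ := hc1
        rw [h, h'] at hx
        have A : InArc i k (i + 1) := by
          have hA := inArc_iff i 0 q 1 (by omega) hqN (by omega)
          rw [F0, Fq, F1] at hA
          rw [hA]
          split_ifs <;> omega
        have B : InArc i k j := by
          have hB := inArc_iff i 0 q p (by omega) hqN hpN
          rw [F0, Fq, Fp] at hB
          rw [hB]
          split_ifs <;> omega
        rcases hx with ⟨-, h2⟩ | ⟨-, h2⟩
        · exact absurd B h2
        · exact absurd A h2
      · -- f (i+1) = j + 1 : killed by hc1
        obtain ⟨-, -, -, -, hx⟩ := hc1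
        rw [h, h'] at hx
        have A : InArc i k (i + 1) := by
          have hA := inArc_iff i 0 q 1 (by omega) hqN (by omega)
          rw [F0, Fq, F1] at hA
          rw [hA]
          split_ifs <;> omega
        have B : InArc i k (j + 1) := by
          have hB := inArc_iff i 0 q (p + 1) (by omega) hqN (by omega)
          rw [F0, Fq, Fp1] at hB
          rw [hB]
          split_ifs <;> omega
        rcases hx with ⟨-, h2⟩ | ⟨-, h2⟩
        · exact absurd B h2
        · exact absurd A h2
      · exact absurd (hfk'.symm.trans (hswap _ _ h')) nii1
      · -- f (i+1) = k + 1 : forces f j = j + 1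
        have hfk1' := hswap _ _ h'
        rcases mj with h2 | h2 | h2 | h2 | h2 | h2
        · exact absurd (h.symm.trans (hswap _ _ h2)).symm njk
        · exact absurd (h'.symm.trans (hswap _ _ h2)).symm njk1
        · exact absurd h2 (hfree _)
        · exact absurd h2 hfj1
        · exact absurd (hfk'.symm.trans (hswap _ _ h2)) nij
        · exact absurd (hfk1'.symm.trans (hswap _ _ h2)) ni1j
    · -- f i = k + 1
      have hfk1' : f (k + 1) = i := hswap _ _ h
      rcases mi1 with h' | h' | h' | h' | h' | h'
      · exact absurd (hswap _ _ h') hfi1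
      · exact absurd h' (hfree _)
      · -- f (i+1) = j : killed by hc1
        obtain ⟨-, -, -, -, hx⟩ := hc1
        rw [h, h'] at hx
        have A : InArc i (k + 1) (i + 1) := by
          have hA := inArc_iff i 0 (q + 1) 1 (by omega) (by omega) (by omega)
          rw [F0, Fq1, F1] at hA
          rw [hA]
          split_ifs <;> omega
        have B : InArc i (k + 1) j := by
          have hB := inArc_iff i 0 (q + 1) p (by omega) (by omega) hpN
          rw [F0, Fq1, Fp] at hB
          rw [hB]
          split_ifs <;> omega
        rcases hx with ⟨-, h2⟩ | ⟨-, h2⟩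
        · exact absurd B h2
        · exact absurd A h2
      · -- f (i+1) = j + 1 : killed by hc1
        obtain ⟨-, -, -, -, hx⟩ := hc1
        rw [h, h'] at hx
        have A : InArc i (k + 1) (i + 1) := by
          have hA := inArc_iff i 0 (q + 1) 1 (by omega) (by omega) (by omega)
          rw [F0, Fq1, F1] at hA
          rw [hA]
          split_ifs <;> omega
        have B : InArc i (k + 1) (j + 1) := by
          have hB := inArc_iff i 0 (q + 1) (p + 1) (by omega) (by omega) (by omega)
          rw [F0, Fq1, Fp1] at hB
          rw [hB]
          split_ifs <;> omega
        rcases hx with ⟨-, h2⟩ | ⟨-, h2⟩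
        · exact absurd B h2
        · exact absurd A h2
      · -- f (i+1) = k : forces f j = j + 1
        have hfk'' := hswap _ _ h'
        rcases mj with h2 | h2 | h2 | h2 | h2 | h2
        · exact absurd (h.symm.trans (hswap _ _ h2)).symm njk1
        · exact absurd (h'.symm.trans (hswap _ _ h2)).symm njk
        · exact absurd h2 (hfree _)
        · exact absurd h2 hfj1
        · exact absurd (hfk''.symm.trans (hswap _ _ h2)) ni1j
        · exact absurd (hfk1'.symm.trans (hswap _ _ h2)) nij
      · exact absurd (hfk1'.symm.trans (hswap _ _ h')) nii1
  obtain ⟨hfi, hfi1', hfjv⟩ := hstruct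
  have hfj1' : f (j + 1) = i := hswap _ _ hfi
  have hfk' : f k = i + 1 := hswap _ _ hfi1'
  have hfk1' : f (k + 1) = j := hswap _ _ hfjv
  haveI : NeZero (2 * (n - 1)) := ⟨by omega⟩
  have hdval : (j + 1 - i).val = p + 1 := by
    rw [show j + 1 - i = ((p + 1 : ℕ) : ZMod (2 * n)) by rw [← Fp1]; ring]
    exact ZMod.val_cast_of_lt (by omega)
  have hEmb : ∀ t : ZMod (2 * (n - 1)), imoveEmb n i (j + 1) t =
      i + ((if t.val < p then p - t.val else t.val + 2 : ℕ) : ZMod (2 * n)) := by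
    intro t
    unfold imoveEmb
    rw [hdval]
    split_ifs with h1 h2 h2
    · rw [show p + 1 - 1 - t.val = p - t.val from by omega]
    · exfalso; omega
    · exfalso; omega
    · rfl
  have hProj : ∀ u : ℕ, u < 2 * n → imoveProj n i (j + 1) (i + (u : ZMod (2 * n))) =
      (((if u < p + 1 then p - u else u - 2) : ℕ) : ZMod (2 * (n - 1))) := by
    intro u hu
    unfold imoveProj
    rw [show i + (u : ZMod (2 * n)) - i = (u : ZMod (2 * n)) from by ring,
      ZMod.val_cast_of_lt hu, hdval]
    split_ifs with h1
    · rw [show p + 1 - 1 - u = p - u from by omega]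
    · rfl
  have hProjEmb : ∀ t : ZMod (2 * (n - 1)),
      imoveProj n i (j + 1) (imoveEmb n i (j + 1) t) = t := by
    intro t
    have htv : t.val < 2 * (n - 1) := ZMod.val_lt t
    rw [hEmb t]
    by_cases hcase : t.val < p
    · rw [if_pos hcase, hProj (p - t.val) (by omega), if_pos (by omega),
        show p - (p - t.val) = t.val from by omega]
      exact ZMod.natCast_rightInverse t
    · rw [if_neg hcase, hProj (t.val + 2) (by omega), if_neg (by omega),
        show t.val + 2 - 2 = t.val from by omega]
      exact ZMod.natCast_rightInverse t
  have hgdef : ∀ t, IMove f i t = imoveProj n i (j + 1) (f (imoveEmb n i (j + 1) t)) := by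
    intro t
    unfold IMove
    rw [hfi]
  refine Or.inr ⟨i, ?_⟩
  show Reducible (IMove f i)
  refine ⟨((p - 1 : ℕ) : ZMod (2 * (n - 1))), ?_⟩
  intro c hcr
  obtain ⟨hne1, -, -, -, hxor⟩ := hcr
  have hwval : (((p - 1 : ℕ) : ZMod (2 * (n - 1)))).val = p - 1 :=
    ZMod.val_cast_of_lt (by omega)
  have hgw : IMove f i ((p - 1 : ℕ) : ZMod (2 * (n - 1))) =
      ((q - 2 : ℕ) : ZMod (2 * (n - 1))) := by
    rw [hgdef, hEmb, hwval, if_pos (by omega : p - 1 < p),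
      show p - (p - 1) = 1 from by omega, F1, hfi1', ← Fq, hProj q hqN, if_neg (by omega)]
  have hcv : c.val < 2 * (n - 1) := ZMod.val_lt c
  obtain ⟨u, hxeq, hu0, huN, hup, huw⟩ :
      ∃ u : ℕ, imoveEmb n i (j + 1) c = i + (u : ZMod (2 * n)) ∧ 0 < u ∧ u < 2 * n ∧
        u ≠ p + 1 ∧ (u = 1 → c.val = p - 1) := by
    refine ⟨if c.val < p then p - c.val else c.val + 2, hEmb c, ?_, ?_, ?_, ?_⟩ <;>
      split_ifs <;> omega
  have hu1 : u ≠ 1 := by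
    intro h1
    apply hne1
    rw [← ZMod.natCast_rightInverse c, huw h1]
  obtain ⟨u', hfxeq, hu'N⟩ :
      ∃ u' : ℕ, f (i + (u : ZMod (2 * n))) = i + (u' : ZMod (2 * n)) ∧ u' < 2 * n :=
    ⟨(f (i + (u : ZMod (2 * n))) - i).val,
      by rw [ZMod.natCast_rightInverse]; ring, ZMod.val_lt _⟩
  have hu'0 : u' ≠ 0 := by
    intro h0
    have h1 : f (i + (u : ZMod (2 * n))) = i := by rw [hfxeq, h0, Nat.cast_zero, add_zero]
    have h2 := hswap _ _ h1
    rw [hfi, ← Fp1] at h2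
    exact hup (hcinj _ _ huN (by omega) (add_left_cancel h2.symm))
  have hu'p : u' ≠ p + 1 := by
    intro h0
    have h1 : f (i + (u : ZMod (2 * n))) = j + 1 := by rw [hfxeq, h0, Fp1]
    have h2 := hswap _ _ h1
    rw [hfj1'] at h2
    have h3 := hcinj 0 u (by omega) huN (add_left_cancel (F0.trans h2))
    omega
  have hchar : ∀ v : ℕ, 0 < v → v < 2 * n → v ≠ p + 1 →
      (InArc ((p - 1 : ℕ) : ZMod (2 * (n - 1))) ((q - 2 : ℕ) : ZMod (2 * (n - 1)))
        (imoveProj n i (j + 1) (i + (v : ZMod (2 * n)))) ↔ (p + 1 < v ∧ v < q)) := by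
    intro v hv0 hvN hvp
    rw [hProj v hvN]
    have hmlt : (if v < p + 1 then p - v else v - 2) < 2 * (n - 1) := by
      split_ifs <;> omega
    have hA := inArc_iff (0 : ZMod (2 * (n - 1))) (p - 1) (q - 2)
      (if v < p + 1 then p - v else v - 2) (by omega) (by omega) hmlt
    simp only [zero_add] at hA
    rw [hA]
    split_ifs <;> omega
  have hc1' : imoveProj n i (j + 1) (i + (u : ZMod (2 * n))) = c := by
    rw [← hxeq]
    exact hProjEmb c
  have hgc : IMove f i c = imoveProj n i (j + 1) (i + (u' : ZMod (2 * n))) := by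
    rw [hgdef, hxeq, hfxeq]
  rw [hgw, hgc, ← hc1', hchar u hu0 huN hup,
    hchar u' (by omega : 0 < u') hu'N hu'p] at hxor
  have hiff : (p + 1 < u ∧ u < q) ↔ (p + 1 < u' ∧ u' < q) := by
    by_cases hxt : (i + (u : ZMod (2 * n))) ∈ trigonSet i j k
    · rcases memset _ hxt with h2 | h2 | h2 | h2 | h2 | h2
      · exact absurd (hcinj u 0 huN (by omega) (add_left_cancel (h2.trans F0.symm))) (by omega)
      · exact absurd (hcinj u 1 huN (by omega) (add_left_cancel (h2.trans F1.symm))) hu1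
      · have hu2 : u = p := hcinj u p huN hpN (add_left_cancel (h2.trans Fp.symm))
        have h3 : i + (u' : ZMod (2 * n)) = i + ((q + 1 : ℕ) : ZMod (2 * n)) := by
          rw [← hfxeq, h2, hfjv]
          exact Fq1.symm
        have hu3 : u' = q + 1 := hcinj u' (q + 1) hu'N (by omega) (add_left_cancel h3)
        omega
      · exact absurd (hcinj u (p + 1) huN (by omega) (add_left_cancel (h2.trans Fp1.symm))) hup
      · have hu2 : u = q := hcinj u q huN hqN (add_left_cancel (h2.trans Fq.symm))
        have h3 : i + (u' : ZMod (2 * n)) = i + ((1 : ℕ) : ZMod (2 * n)) := by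
          rw [← hfxeq, h2, hfk']
          exact F1.symm
        have hu3 : u' = 1 := hcinj u' 1 hu'N (by omega) (add_left_cancel h3)
        omega
      · have hu2 : u = q + 1 := hcinj u (q + 1) huN (by omega) (add_left_cancel (h2.trans Fq1.symm))
        have h3 : i + (u' : ZMod (2 * n)) = i + ((p : ℕ) : ZMod (2 * n)) := by
          rw [← hfxeq, h2, hfk1']
          exact Fp.symm
        have hu3 : u' = p := hcinj u' p hu'N hpN (add_left_cancel h3)
        omega
    · rcases hloc _ hxt with ⟨ha, hb⟩ | ⟨ha, hb⟩ | ⟨ha, hb⟩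
      · have hA := inArc_iff i 1 p u (by omega) hpN huN
        rw [F1, Fp] at hA
        rw [hA, if_pos (by omega : 1 ≤ p)] at ha
        have hB := inArc_iff i 1 p u' (by omega) hpN hu'N
        rw [F1, Fp] at hB
        rw [hfxeq, hB, if_pos (by omega : 1 ≤ p)] at hb
        omega
      · have hA := inArc_iff i (p + 1) q u (by omega) hqN huN
        rw [Fp1, Fq] at hA
        rw [hA, if_pos (by omega : p + 1 ≤ q)] at ha
        have hB := inArc_iff i (p + 1) q u' (by omega) hqN hu'N
        rw [Fp1, Fq] at hB
        rw [hfxeq, hB, if_pos (by omega : p + 1 ≤ q)] at hb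
        omega
      · have hA := inArc_iff i (q + 1) 0 u (by omega) (by omega) huN
        rw [Fq1, F0] at hA
        rw [hA, if_neg (by omega : ¬ q + 1 ≤ 0)] at ha
        have hB := inArc_iff i (q + 1) 0 u' (by omega) (by omega) hu'N
        rw [Fq1, F0] at hB
        rw [hfxeq, hB, if_neg (by omega : ¬ q + 1 ≤ 0)] at hb
        omega
  rcases hxor with ⟨h1, h2⟩ | ⟨h1, h2⟩
  · exact h2 (hiff.mp h1)
  · exact h2 (hiff.mpr h1)


end SphericalCurveReductivity
end

section
/- If a chord diagram is not reducible and contains a trigon of type D, then there exists a chord p such that the I-move at p produces a chord diagram containing a trigon of type A or of type B. (Step in the proof of the paper's Lemma 2.6, where a single I-move applied to a reduced curve with a type D trigon yields a trigon of type B.) -/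
namespace ZMod

theorem val_sub_eq_ite {N : ℕ} [NeZero N] (a b : ZMod N) :
    (a - b).val = if b.val ≤ a.val then a.val - b.val else a.val + N - b.val := by
  have := val_lt (a - b)
  have := val_lt b
  rcases lt_or_ge ((a - b).val + b.val) N with h | h
  · have := val_add_of_lt h
    rw [sub_add_cancel] at this
    split_ifs <;> omega
  · have := val_add_val_of_le h
    rw [sub_add_cancel] at this
    split_ifs <;> omega

theorem val_add_one_of_ne_zero {N : ℕ} [NeZero N] {x : ZMod N} (h : x + 1 ≠ 0) :
    (x + 1).val = x.val + 1 := by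
  have hN : N ≠ 1 := by
    rintro rfl
    exact h (Subsingleton.elim _ _)
  rw [val_add, val_one'' hN]
  refine Nat.mod_eq_of_lt (lt_of_le_of_ne x.val_lt fun hN' => h ?_)
  rw [← val_eq_zero, val_add, val_one'' hN, hN', Nat.mod_self]

theorem val_sub_inj {N : ℕ} [NeZero N] (p : ZMod N) {x y : ZMod N} :
    (x - p).val = (y - p).val ↔ x = y :=
  ⟨fun h => sub_left_injective (val_injective N h), fun h => h ▸ rfl⟩

theorem val_sub_ne_val_sub {N : ℕ} [NeZero N] {x y : ZMod N} (p : ZMod N) (h : x ≠ y) :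
    (x - p).val ≠ (y - p).val :=
  mt (val_sub_inj p).1 h

theorem ne_of_val_sub_ne {N : ℕ} [NeZero N] {x y : ZMod N} (p : ZMod N)
    (h : (x - p).val ≠ (y - p).val) : x ≠ y :=
  mt (val_sub_inj p).2 h

theorem val_sub_ne_zero {N : ℕ} [NeZero N] {x p : ZMod N} (h : x ≠ p) : (x - p).val ≠ 0 := by
  simpa [val_eq_zero, sub_eq_zero] using h

theorem val_add_one_sub {N : ℕ} [NeZero N] {x i : ZMod N} (h : x + 1 ≠ i) :
    (x + 1 - i).val = (x - i).val + 1 := by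
  rw [add_sub_right_comm]
  exact val_add_one_of_ne_zero (by rwa [← add_sub_right_comm, sub_ne_zero])

theorem val_add_one_sub_self {N : ℕ} [NeZero N] {i : ZMod N} (h : i + 1 ≠ i) :
    (i + 1 - i).val = 1 := by
  rw [add_sub_cancel_left]
  exact val_one'' (by rintro rfl; exact h (Subsingleton.elim _ _))

theorem val_sub_eq_ite_of_base {N : ℕ} [NeZero N] (p a b : ZMod N) :
    (a - b).val = if (b - p).val ≤ (a - p).val then (a - p).val - (b - p).val
      else (a - p).val + N - (b - p).val := by
  rw [← sub_sub_sub_cancel_right a b p, val_sub_eq_ite (a - p)]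

theorem add_val_sub {N : ℕ} [NeZero N] (i x : ZMod N) : i + ((x - i).val : ZMod N) = x := by
  rw [natCast_zmod_val, add_sub_cancel]

theorem val_add_natCast_sub {N : ℕ} [NeZero N] (i : ZMod N) {m : ℕ} (h : m < N) :
    (i + m - i).val = m := by
  rw [add_sub_cancel_left, val_cast_of_lt h]

theorem val_add_natCast_add_one_sub {N : ℕ} [NeZero N] (i : ZMod N) {m : ℕ}
    (h : m + 1 < N) :
    (i + m + 1 - i).val = m + 1 := by
  rw [add_assoc, ← Nat.cast_add_one, val_add_natCast_sub i h]

end ZMod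

namespace SphericalCurveReductivity

open ZMod

def Between (a b c : ℕ) : Prop :=
  a < c ∧ c < b ∨ b < c ∧ c < a

def Interleaved (a b c d : ℕ) : Prop :=
  c ≠ a ∧ c ≠ b ∧ d ≠ a ∧ d ≠ b ∧ Xor (Between a b c) (Between a b d)

/-- New position, after the I-move at the chord `{0, d}`, of the point at position `s`. -/
def imovePos (d s : ℕ) : ℕ :=
  if s < d then d - 1 - s else s - 2

section Positions

variable {d s t u : ℕ}

theorem imovePos_inj (hd : d ≠ 0) (hs0 : s ≠ 0) (hsd : s ≠ d) (ht0 : t ≠ 0) (htd : t ≠ d) :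
    imovePos d s = imovePos d t ↔ s = t := by
  unfold imovePos
  split_ifs <;> omega

/-- The I-move reverses the order inside the arc `(0, d)`, so betweenness changes exactly when
the outer chord `{s, t}` crosses `{0, d}` and the point `u` lies inside the arc. -/
theorem between_imovePos (hd : d ≠ 0) (hs0 : s ≠ 0) (hsd : s ≠ d) (ht0 : t ≠ 0) (htd : t ≠ d)
    (hu0 : u ≠ 0) (hud : u ≠ d) (hus : u ≠ s) (hut : u ≠ t) :
    Between (imovePos d s) (imovePos d t) (imovePos d u) ↔
      Xor (Between s t u) (Xor (s < d) (t < d) ∧ u < d) := by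
  unfold Between imovePos Xor
  split_ifs <;> omega

theorem interleaved_zero_iff (hs0 : s ≠ 0) (hsd : s ≠ d) (ht0 : t ≠ 0) (htd : t ≠ d) :
    Interleaved 0 d s t ↔ Xor (s < d) (t < d) := by
  unfold Interleaved Between Xor
  omega

theorem interleaved_imovePos {s' t' : ℕ} (hd : d ≠ 0) (hs0 : s ≠ 0) (hsd : s ≠ d)
    (hs0' : s' ≠ 0) (hsd' : s' ≠ d) (ht0 : t ≠ 0) (htd : t ≠ d) (ht0' : t' ≠ 0) (htd' : t' ≠ d)
    (hts : t ≠ s) (hts' : t ≠ s') (hts₂ : t' ≠ s) (hts₂' : t' ≠ s') :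
    Interleaved (imovePos d s) (imovePos d s') (imovePos d t) (imovePos d t') ↔
      Xor (Interleaved s s' t t') (Interleaved 0 d s s' ∧ Interleaved 0 d t t') := by
  rw [interleaved_zero_iff hs0 hsd hs0' hsd', interleaved_zero_iff ht0 htd ht0' htd']
  simp only [Interleaved, ne_eq, imovePos_inj hd, between_imovePos hd, *, not_false_eq_true,
    true_and]
  grind

end Positions

section Crossing

variable {N : ℕ}

theorem inArc_iff_s13 [NeZero N] (p a b x : ZMod N) :
    InArc a b x ↔
      (a - p).val < (x - p).val ∧ (x - p).val < (b - p).val ∨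
        (b - p).val < (a - p).val ∧ (a - p).val < (x - p).val ∨
          (x - p).val < (b - p).val ∧ (b - p).val < (a - p).val := by
  rw [InArc, val_sub_eq_ite_of_base p x a, val_sub_eq_ite_of_base p b a]
  have := (a - p).val_lt; have := (b - p).val_lt; have := (x - p).val_lt
  split_ifs <;> omega

theorem crosses_iff_interleaved [NeZero N] (f : ZMod N → ZMod N) (p a c : ZMod N) :
    Crosses f a c ↔ Interleaved (a - p).val (f a - p).val (c - p).val (f c - p).val := by
  have hne : ∀ x y : ZMod N, x ≠ y ↔ (x - p).val ≠ (y - p).val := fun x y =>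
    ⟨val_sub_ne_val_sub p, ne_of_val_sub_ne p⟩
  show _ ∧ _ ∧ _ ∧ _ ∧ Xor _ _ ↔ _
  simp only [Interleaved, Between, inArc_iff_s13 p, hne c, hne (f c), Xor]
  omega

theorem crosses_apply_right {f : ZMod N → ZMod N} (hinv : Function.Involutive f)
    (a c : ZMod N) :
    Crosses f a (f c) ↔ Crosses f a c := by
  show _ ∧ _ ∧ _ ∧ _ ∧ Xor _ _ ↔ _ ∧ _ ∧ _ ∧ _ ∧ Xor _ _
  rw [hinv c, xor_comm]
  tauto

theorem exists_crosses_inArc {f : ZMod N → ZMod N} (hinv : Function.Involutive f)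
    (hnr : ¬ Reducible f) (a : ZMod N) : ∃ x, Crosses f a x ∧ InArc a (f a) x := by
  obtain ⟨c, hc⟩ : ∃ c, Crosses f a c := by
    by_contra h
    exact hnr ⟨a, fun c hc => h ⟨c, hc⟩⟩
  rcases hc.2.2.2.2 with ⟨hin, -⟩ | ⟨hin, -⟩
  · exact ⟨c, hc, hin⟩
  · exact ⟨f c, (crosses_apply_right hinv a c).2 hc, hin⟩

end Crossing

section IMove

variable {n : ℕ} [NeZero n]

theorem val_imoveProj {a b x : ZMod (2 * n)} (hba : b ≠ a) (hxa : x ≠ a) (hxb : x ≠ b) :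
    (imoveProj n a b x).val = imovePos (b - a).val (x - a).val := by
  have := val_sub_ne_zero hxa
  have := val_sub_ne_zero hba
  have := val_sub_ne_val_sub a hxb
  have := (x - a).val_lt
  have := (b - a).val_lt
  unfold imoveProj imovePos
  split_ifs <;> exact val_cast_of_lt (by omega)

theorem imoveEmb_imoveProj {a b x : ZMod (2 * n)} (hba : b ≠ a) (hxa : x ≠ a) (hxb : x ≠ b) :
    imoveEmb n a b (imoveProj n a b x) = x := by
  have := val_sub_ne_zero hxa
  have := val_sub_ne_zero hba
  have := val_sub_ne_val_sub a hxb
  have key : ∀ m : ℕ, m = (x - a).val → a + (m : ZMod (2 * n)) = x := by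
    rintro m rfl
    rw [natCast_zmod_val, add_sub_cancel]
  unfold imoveEmb
  rw [val_imoveProj hba hxa hxb, imovePos]
  split_ifs <;> first | omega | exact key _ (by omega)

theorem IMove_imoveProj {f : ZMod (2 * n) → ZMod (2 * n)} {p x : ZMod (2 * n)} (hp : f p ≠ p)
    (hxp : x ≠ p) (hxfp : x ≠ f p) :
    IMove f p (imoveProj n p (f p) x) = imoveProj n p (f p) (f x) := by
  rw [IMove, imoveEmb_imoveProj hp hxp hxfp]

theorem imoveProj_injOn {a b x y : ZMod (2 * n)} (hba : b ≠ a) (hxa : x ≠ a) (hxb : x ≠ b)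
    (hya : y ≠ a) (hyb : y ≠ b) (h : imoveProj n a b x = imoveProj n a b y) : x = y := by
  rw [← imoveEmb_imoveProj hba hxa hxb, h, imoveEmb_imoveProj hba hya hyb]

theorem two_le_of_three_ne {a b x : ZMod (2 * n)} (hba : b ≠ a) (hxa : x ≠ a) (hxb : x ≠ b) :
    2 ≤ n := by
  have := val_sub_ne_val_sub a hxb
  have := val_sub_ne_zero hxa
  have := val_sub_ne_zero hba
  have := (x - a).val_lt
  have := (b - a).val_lt
  omega

theorem crosses_IMove {f : ZMod (2 * n) → ZMod (2 * n)} (hinv : Function.Involutive f)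
    {p x y : ZMod (2 * n)} (hp : f p ≠ p) (hxp : x ≠ p) (hxfp : x ≠ f p) (hyp : y ≠ p)
    (hyfp : y ≠ f p) (hyx : y ≠ x) (hyfx : y ≠ f x) :
    Crosses (IMove f p) (imoveProj n p (f p) x) (imoveProj n p (f p) y) ↔
      Xor (Crosses f x y) (Crosses f p x ∧ Crosses f p y) := by
  have hfxp : f x ≠ p := fun h => hxfp (by rw [← h, hinv])
  have hfxfp : f x ≠ f p := fun h => hxp (hinv.injective h)
  have hfyp : f y ≠ p := fun h => hyfp (by rw [← h, hinv])
  have hfyfp : f y ≠ f p := fun h => hyp (hinv.injective h)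
  have hfyx : f y ≠ x := fun h => hyfx (by rw [← h, hinv])
  have hfyfx : f y ≠ f x := fun h => hyx (hinv.injective h)
  have : NeZero (2 * (n - 1)) := ⟨by have := two_le_of_three_ne hp hxp hxfp; omega⟩
  rw [crosses_iff_interleaved _ 0, IMove_imoveProj hp hxp hxfp, IMove_imoveProj hp hyp hyfp]
  simp only [crosses_iff_interleaved f p, sub_zero, val_imoveProj hp hxp hxfp,
    val_imoveProj hp hfxp hfxfp, val_imoveProj hp hyp hyfp, val_imoveProj hp hfyp hfyfp, sub_self,
    val_zero]
  exact interleaved_imovePos (val_sub_ne_zero hp) (val_sub_ne_zero hxp)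
    (val_sub_ne_val_sub p hxfp) (val_sub_ne_zero hfxp) (val_sub_ne_val_sub p hfxfp)
    (val_sub_ne_zero hyp) (val_sub_ne_val_sub p hyfp) (val_sub_ne_zero hfyp)
    (val_sub_ne_val_sub p hfyfp) (val_sub_ne_val_sub p hyx) (val_sub_ne_val_sub p hyfx)
    (val_sub_ne_val_sub p hfyx) (val_sub_ne_val_sub p hfyfx)

theorem imoveProj_add_one {a b x : ZMod (2 * n)} (hba : b ≠ a) (hxa : x ≠ a) (hxb : x ≠ b)
    (hxa' : x + 1 ≠ a) (hxb' : x + 1 ≠ b) :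
    if (x - a).val < (b - a).val then imoveProj n a b x = imoveProj n a b (x + 1) + 1
    else imoveProj n a b (x + 1) = imoveProj n a b x + 1 := by
  have : NeZero (2 * (n - 1)) := ⟨by have := two_le_of_three_ne hba hxa hxb; omega⟩
  have hv := val_imoveProj hba hxa hxb
  have hv' := val_imoveProj hba hxa' hxb'
  have := val_sub_ne_val_sub a hxb
  have hsd := val_sub_ne_val_sub a hxb'
  have := val_sub_ne_zero hxa
  have := val_sub_ne_zero hba
  rw [val_add_one_sub hxa'] at hv' hsd
  have eq_add_one : ∀ u v : ZMod (2 * (n - 1)), u.val = v.val + 1 → u = v + 1 := fun u v h => by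
    rw [← natCast_zmod_val u, h, Nat.cast_succ, natCast_zmod_val]
  unfold imovePos at hv hv'
  split_ifs at hv hv' ⊢ <;> first | omega | exact eq_add_one _ _ (by omega)

/-- The corner pair `(x, x + 1)` becomes the corner pair
`(imoveCorner n a b x, imoveCorner n a b x + 1)` after the I-move at `{a, b}`; its two points
trade places when they lie in the reversed arc. -/
def imoveCorner (n : ℕ) (a b x : ZMod (2 * n)) : ZMod (2 * (n - 1)) :=
  if (x - a).val < (b - a).val then imoveProj n a b (x + 1) else imoveProj n a b x

theorem imoveCorner_of_lt {a b x : ZMod (2 * n)} (hba : b ≠ a) (hxa : x ≠ a) (hxb : x ≠ b)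
    (hxa' : x + 1 ≠ a) (hxb' : x + 1 ≠ b) (h : (x - a).val < (b - a).val) :
    imoveCorner n a b x = imoveProj n a b (x + 1) ∧
      imoveCorner n a b x + 1 = imoveProj n a b x := by
  have h' := imoveProj_add_one hba hxa hxb hxa' hxb'
  rw [if_pos h] at h'
  rw [imoveCorner, if_pos h]
  exact ⟨rfl, h'.symm⟩

theorem imoveCorner_of_not_lt {a b x : ZMod (2 * n)} (hba : b ≠ a) (hxa : x ≠ a) (hxb : x ≠ b)
    (hxa' : x + 1 ≠ a) (hxb' : x + 1 ≠ b) (h : ¬(x - a).val < (b - a).val) :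
    imoveCorner n a b x = imoveProj n a b x ∧
      imoveCorner n a b x + 1 = imoveProj n a b (x + 1) := by
  have h' := imoveProj_add_one hba hxa hxb hxa' hxb'
  rw [if_neg h] at h'
  rw [imoveCorner, if_neg h]
  exact ⟨rfl, h'.symm⟩

theorem imoveCorner_cases {a b x : ZMod (2 * n)} (hba : b ≠ a) (hxa : x ≠ a) (hxb : x ≠ b)
    (hxa' : x + 1 ≠ a) (hxb' : x + 1 ≠ b) :
    imoveCorner n a b x = imoveProj n a b x ∧ imoveCorner n a b x + 1 = imoveProj n a b (x + 1) ∨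
      imoveCorner n a b x = imoveProj n a b (x + 1) ∧
        imoveCorner n a b x + 1 = imoveProj n a b x := by
  by_cases h : (x - a).val < (b - a).val
  · exact Or.inr (imoveCorner_of_lt hba hxa hxb hxa' hxb' h)
  · exact Or.inl (imoveCorner_of_not_lt hba hxa hxb hxa' hxb' h)

theorem imoveCorner_pair {a b x : ZMod (2 * n)} (hba : b ≠ a) (hxa : x ≠ a) (hxb : x ≠ b)
    (hxa' : x + 1 ≠ a) (hxb' : x + 1 ≠ b) :
    ({imoveCorner n a b x, imoveCorner n a b x + 1} : Finset _) =
      {imoveProj n a b x, imoveProj n a b (x + 1)} := by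
  rcases imoveCorner_cases hba hxa hxb hxa' hxb' with ⟨h, h'⟩ | ⟨h, h'⟩ <;> rw [h', h]
  exact Finset.pair_comm _ _

theorem trigonSet_eq_union {N : ℕ} (i j k : ZMod N) :
    trigonSet i j k = {i, i + 1} ∪ ({j, j + 1} ∪ {k, k + 1}) := by
  ext x
  simp only [trigonSet, Finset.mem_union, Finset.mem_insert, Finset.mem_singleton, or_assoc]

theorem trigonSet_imoveCorner {a b i j k : ZMod (2 * n)} (hba : b ≠ a)
    (haS : a ∉ trigonSet i j k) (hbS : b ∉ trigonSet i j k) :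
    trigonSet (imoveCorner n a b i) (imoveCorner n a b j) (imoveCorner n a b k) =
      (trigonSet i j k).image (imoveProj n a b) := by
  have hne : ∀ x ∈ trigonSet i j k, x ≠ a ∧ x ≠ b := fun x hx =>
    ⟨fun h => haS (h ▸ hx), fun h => hbS (h ▸ hx)⟩
  have hpair : ∀ x, x ∈ trigonSet i j k → x + 1 ∈ trigonSet i j k →
      ({imoveCorner n a b x, imoveCorner n a b x + 1} : Finset _) =
        {imoveProj n a b x, imoveProj n a b (x + 1)} := fun x hx hx' =>
    imoveCorner_pair hba (hne x hx).1 (hne x hx).2 (hne _ hx').1 (hne _ hx').2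
  rw [trigonSet_eq_union, trigonSet_eq_union i j k, Finset.image_union, Finset.image_union,
    hpair i (by simp [trigonSet]) (by simp [trigonSet]),
    hpair j (by simp [trigonSet]) (by simp [trigonSet]),
    hpair k (by simp [trigonSet]) (by simp [trigonSet])]
  simp only [Finset.image_insert, Finset.image_singleton]

theorem Trigon.imove {f : ZMod (2 * n) → ZMod (2 * n)} (hinv : Function.Involutive f)
    {p i j k : ZMod (2 * n)} (hp : f p ≠ p) (ht : Trigon f i j k)
    (hpS : p ∉ trigonSet i j k) (hfpS : f p ∉ trigonSet i j k) :
    Trigon (IMove f p) (imoveCorner n p (f p) i) (imoveCorner n p (f p) j)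
      (imoveCorner n p (f p) k) := by
  set π := imoveProj n p (f p)
  set S := trigonSet i j k
  have hne : ∀ x ∈ S, x ≠ p ∧ x ≠ f p := fun x hx =>
    ⟨fun h => hpS (h ▸ hx), fun h => hfpS (h ▸ hx)⟩
  have hπ : Set.InjOn π S := fun x hx y hy =>
    imoveProj_injOn hp (hne x hx).1 (hne x hx).2 (hne y hy).1 (hne y hy).2
  have hmaps : ∀ x ∈ S, IMove f p (π x) = π (f x) := fun x hx =>
    IMove_imoveProj hp (hne x hx).1 (hne x hx).2
  have hcross : ∀ x, x ∈ S → x + 1 ∈ S → f x ≠ x + 1 →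
      IMove f p (imoveCorner n p (f p) x) ≠ imoveCorner n p (f p) x + 1 := by
    intro x hx hx' hfx
    rcases imoveCorner_cases hp (hne x hx).1 (hne x hx).2 (hne _ hx').1 (hne _ hx').2 with
      ⟨h, h'⟩ | ⟨h, h'⟩ <;> rw [h', h, hmaps _ (by assumption)]
    · exact fun e => hfx (hπ (ht.2.1 x hx) hx' e)
    · exact fun e => hfx (by rw [← hinv (x + 1), hπ (ht.2.1 _ hx') hx e])
  have hS : trigonSet (imoveCorner n p (f p) i) (imoveCorner n p (f p) j)
      (imoveCorner n p (f p) k) = S.image π := trigonSet_imoveCorner hp hpS hfpS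
  refine ⟨?_, ?_, hcross i (by simp [S, trigonSet]) (by simp [S, trigonSet]) ht.2.2.1,
    hcross j (by simp [S, trigonSet]) (by simp [S, trigonSet]) ht.2.2.2.1,
    hcross k (by simp [S, trigonSet]) (by simp [S, trigonSet]) ht.2.2.2.2⟩
  · rw [hS, Finset.card_image_of_injOn hπ, ht.1]
  · intro y hy
    rw [hS] at hy ⊢
    obtain ⟨x, hx, rfl⟩ := Finset.mem_image.1 hy
    rw [hmaps x hx]
    exact Finset.mem_image_of_mem π (ht.2.1 x hx)

end IMove

section TrigonD

variable {N : ℕ}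

theorem nodup_of_card_trigonSet {i j k : ZMod N} (h : (trigonSet i j k).card = 6) :
    [i, i + 1, j, j + 1, k, k + 1].Nodup := by
  rw [← Multiset.coe_nodup, ← Multiset.toFinset_card_eq_card_iff_nodup]
  simpa [trigonSet] using h

theorem trigonSet_comm (i j k : ZMod N) : trigonSet i j k = trigonSet i k j := by
  ext x
  simp only [trigonSet, Finset.mem_insert, Finset.mem_singleton]
  tauto

theorem Trigon.swap {f : ZMod N → ZMod N} {i j k : ZMod N} (ht : Trigon f i j k) :
    Trigon f i k j := by
  obtain ⟨hcard, hmaps, hi, hj, hk⟩ := ht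
  exact ⟨trigonSet_comm i j k ▸ hcard, trigonSet_comm i j k ▸ hmaps, hi, hk, hj⟩

theorem Trigon.trigonThird_spec {f : ZMod N → ZMod N} (hinv : Function.Involutive f)
    (hfree : ∀ a, f a ≠ a) {i j k : ZMod N} (ht : Trigon f i j k) :
    trigonThird f i j ∈ trigonSet i j k ∧ trigonThird f i j ≠ i ∧ trigonThird f i j ≠ i + 1 ∧
      trigonThird f i j ≠ f i ∧ trigonThird f i j ≠ f (i + 1) := by
  obtain ⟨hcard, hmaps, hi, hj, hk⟩ := ht
  have hnd := nodup_of_card_trigonSet hcard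
  simp only [List.nodup_cons, List.mem_cons, List.not_mem_nil, or_false, not_or] at hnd
  have hfk := hmaps k (by simp [trigonSet])
  have hfi := hmaps i (by simp [trigonSet])
  have hfi1 := hmaps (i + 1) (by simp [trigonSet])
  simp only [trigonSet, Finset.mem_insert, Finset.mem_singleton] at hfk hfi hfi1
  have hff : ∀ x, f (f x) = x := hinv
  -- if `j` and `j + 1` were the partners of `i` and `i + 1`, the chord at `k` would be `{k, k + 1}`
  unfold trigonThird
  split_ifs
  · exact ⟨by simp [trigonSet], by grind⟩
  · exact ⟨by simp [trigonSet], by grind⟩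

/-- `A` is an endpoint of the third chord of the trigon. -/
theorem TrigonD.exists_third_chord [NeZero N] {f : ZMod N → ZMod N}
    (hinv : Function.Involutive f) (hfree : ∀ a, f a ≠ a) {i j k : ZMod N}
    (ht : TrigonD f i j k) :
    ∃ A ∈ trigonSet i j k, A ≠ i ∧ A ≠ i + 1 ∧ A ≠ f i ∧ A ≠ f (i + 1) ∧
      ¬ Crosses f i A ∧ ¬ Crosses f (i + 1) A ∧ (A - i).val < (f A - i).val := by
  obtain ⟨htri, -, hc0T, hc1T⟩ := ht
  obtain ⟨hTS, hTi, hTi1, hTfi, hTfi1⟩ := htri.trigonThird_spec hinv hfree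
  have hff : ∀ x, f (f x) = x := hinv
  rcases lt_or_gt_of_ne (val_sub_ne_val_sub i (hfree (trigonThird f i j)).symm) with h | h
  · exact ⟨_, hTS, hTi, hTi1, hTfi, hTfi1, hc0T, hc1T, h⟩
  · exact ⟨_, htri.2.1 _ hTS, fun e => hTfi (hinv.injective (by rw [hff, e])),
      fun e => hTfi1 (hinv.injective (by rw [hff, e])), fun e => hTi (hinv.injective e),
      fun e => hTi1 (hinv.injective e), by rwa [crosses_apply_right hinv],
      by rwa [crosses_apply_right hinv], by rwa [hff]⟩

theorem add_one_ne_of_card_trigonSet {i j k : ZMod N} (hcard : (trigonSet i j k).card = 6) :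
    i + 1 ≠ i ∧ j + 1 ≠ i ∧ k + 1 ≠ i := by
  have hnd := nodup_of_card_trigonSet hcard
  simp only [List.nodup_cons, List.mem_cons, List.not_mem_nil, or_false, not_or] at hnd
  exact ⟨Ne.symm hnd.1.1, Ne.symm hnd.1.2.2.1, Ne.symm hnd.1.2.2.2.2⟩

theorem val_sub_of_mem_trigonSet [NeZero N] {i j k x : ZMod N}
    (hcard : (trigonSet i j k).card = 6) (hx : x ∈ trigonSet i j k) (hxi : x ≠ i)
    (hxi1 : x ≠ i + 1) :
    (x - i).val = (j - i).val ∨ (x - i).val = (j - i).val + 1 ∨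
      (x - i).val = (k - i).val ∨ (x - i).val = (k - i).val + 1 := by
  obtain ⟨-, hj, hk⟩ := add_one_ne_of_card_trigonSet hcard
  simp only [trigonSet, Finset.mem_insert, Finset.mem_singleton] at hx
  rcases hx with rfl | rfl | rfl | rfl | rfl | rfl
  · exact absurd rfl hxi
  · exact absurd rfl hxi1
  all_goals simp [val_add_one_sub hj, val_add_one_sub hk]

theorem apply_eq_add_one_of_val_sub [NeZero N] {f : ZMod N → ZMod N} {i x y : ZMod N}
    (hx : x + 1 ≠ i) (hy : (y - i).val = (x - i).val) (hfy : (f y - i).val = (x - i).val + 1) :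
    f x = x + 1 := by
  rw [(val_sub_inj i).1 hy] at hfy
  exact (val_sub_inj i).1 (hfy.trans (val_add_one_sub hx).symm)

theorem two_le_val_sub_of_card_trigonSet [NeZero N] {i j k : ZMod N}
    (hcard : (trigonSet i j k).card = 6) : 2 ≤ (j - i).val ∧ 2 ≤ (k - i).val := by
  have hnd := nodup_of_card_trigonSet hcard
  simp only [List.nodup_cons, List.mem_cons, List.not_mem_nil, or_false, not_or] at hnd
  have := val_add_one_sub_self (Ne.symm hnd.1.1)
  have := val_sub_ne_val_sub i hnd.1.2.1
  have := val_sub_ne_val_sub i hnd.1.2.2.2.1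
  have := val_sub_ne_val_sub i hnd.2.1.1
  have := val_sub_ne_val_sub i hnd.2.1.2.2.1
  simp only [sub_self, val_zero] at *
  omega

/-- In positions counted from `i`, a type D trigon at `i` has its first two chords at
`0 ↦ a` and `1 ↦ p`, and its third chord `{t, u}` joins two points of the corner pairs
`(J, J + 1)` and `(K, K + 1)`. -/
theorem noncrossing_trigon_positions {J K a p t u : ℕ}
    (ha : a = J ∨ a = J + 1 ∨ a = K ∨ a = K + 1) (hp : p = J ∨ p = J + 1 ∨ p = K ∨ p = K + 1)
    (ht : t = J ∨ t = J + 1 ∨ t = K ∨ t = K + 1) (hu : u = J ∨ u = J + 1 ∨ u = K ∨ u = K + 1)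
    (hap : a ≠ p) (hta : t ≠ a) (htp : t ≠ p) (hua : u ≠ a) (hup : u ≠ p) (htu : t < u)
    (hJ : ¬(t = J ∧ u = J + 1)) (hK : ¬(t = K ∧ u = K + 1))
    (hpa : p < a) (hsep_a : u < a ∨ a < t) (hsep_p : u < p ∨ p < t) :
    t = p + 1 ∧ u + 1 = a ∧ (p = J ∧ u = K ∨ p = K ∧ u = J) := by
  rcases ht with rfl | rfl | rfl | rfl <;> rcases hu with rfl | rfl | rfl | rfl <;> omega

theorem TrigonD.chord_positions [NeZero N] {f : ZMod N → ZMod N}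
    (hinv : Function.Involutive f) (hfree : ∀ a, f a ≠ a) {i j k : ZMod N}
    (ht : TrigonD f i j k) :
    ∃ A ∈ trigonSet i j k, 1 < (f (i + 1) - i).val ∧ (A - i).val = (f (i + 1) - i).val + 1 ∧
      (A - i).val < (f A - i).val ∧ (f A - i).val + 1 = (f i - i).val ∧
      ((f (i + 1) - i).val = (j - i).val ∧ (f A - i).val = (k - i).val ∨
        (f (i + 1) - i).val = (k - i).val ∧ (f A - i).val = (j - i).val) := by
  obtain ⟨A, hAS, hAi, hAi1, hAfi, hAfi1, hc0A, hc1A, hlt⟩ := ht.exists_third_chord hinv hfree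
  obtain ⟨⟨hcard, hmaps, hfi, hfj, hfk⟩, hc01, -, -⟩ := ht
  have hff : ∀ x, f (f x) = x := hinv
  obtain ⟨hi1, hj1, hk1⟩ := add_one_ne_of_card_trigonSet hcard
  have h0 : (i - i).val = 0 := by simp
  have h1 := val_add_one_sub_self hi1
  obtain ⟨hJ, hK⟩ := two_le_val_sub_of_card_trigonSet hcard
  have hfi1 : f (i + 1) ≠ i := fun h => hfi (by rw [← hff (i + 1), h])
  have hfAi : f A ≠ i := fun h => hAfi (by rw [← h, hff])
  have hfAi1 : f A ≠ i + 1 := fun h => hAfi1 (by rw [← h, hff])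
  have ha := val_sub_of_mem_trigonSet hcard (hmaps i (by simp [trigonSet])) (hfree i) hfi
  have hp := val_sub_of_mem_trigonSet hcard (hmaps _ (by simp [trigonSet])) hfi1 (hfree _)
  have ht := val_sub_of_mem_trigonSet hcard hAS hAi hAi1
  have hu := val_sub_of_mem_trigonSet hcard (hmaps A hAS) hfAi hfAi1
  have hap := val_sub_ne_val_sub i fun h => hi1 (hinv.injective h).symm
  have hta := val_sub_ne_val_sub i hAfi
  have htp := val_sub_ne_val_sub i hAfi1
  have hua := val_sub_ne_val_sub i fun h => hAi (hinv.injective h)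
  have hup := val_sub_ne_val_sub i fun h => hAi1 (hinv.injective h)
  rw [crosses_iff_interleaved f i, h0, h1] at hc01
  rw [crosses_iff_interleaved f i, h0] at hc0A
  rw [crosses_iff_interleaved f i, h1] at hc1A
  unfold Interleaved Between Xor at hc01 hc0A hc1A
  obtain ⟨htp, hua, hPQ⟩ := noncrossing_trigon_positions ha hp ht hu hap hta htp hua hup hlt
    (mt (fun h => apply_eq_add_one_of_val_sub hj1 h.1 h.2) hfj)
    (mt (fun h => apply_eq_add_one_of_val_sub hk1 h.1 h.2) hfk) (by omega) (by omega) (by omega)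
  exact ⟨A, hAS, by omega, htp, hlt, hua, hPQ⟩

/-- The three chords of a trigon of type D with corners `i`, `i + P`, `i + Q`. -/
def TrigonDChords {N : ℕ} (f : ZMod N → ZMod N) (i : ZMod N) (P Q : ℕ) : Prop :=
  1 < P ∧ P + 1 < Q ∧ Q + 1 < N ∧
    f (i + 1) = i + P ∧ f (i + P + 1) = i + Q ∧ f (i + Q + 1) = i

theorem TrigonD.exists_trigonDChords [NeZero N] {f : ZMod N → ZMod N}
    (hinv : Function.Involutive f) (hfree : ∀ a, f a ≠ a) {i j k : ZMod N}
    (ht : TrigonD f i j k) :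
    ∃ P Q : ℕ, TrigonDChords f i P Q ∧ Trigon f i (i + P) (i + Q) := by
  obtain ⟨A, -, hP, hA, hAfA, hfA, hPQ⟩ := ht.chord_positions hinv hfree
  have hff : ∀ x, f (f x) = x := hinv
  refine ⟨(f (i + 1) - i).val, (f A - i).val, ⟨hP, by omega, hfA ▸ (f i - i).val_lt,
    (add_val_sub _ _).symm, ?_, ?_⟩, ?_⟩
  · rw [add_assoc, ← Nat.cast_add_one, ← hA, add_val_sub, add_val_sub]
  · rw [add_assoc, ← Nat.cast_add_one, hfA, add_val_sub, hff]
  · rcases hPQ with ⟨hpJ, huK⟩ | ⟨hpK, huJ⟩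
    · rw [hpJ, huK, add_val_sub, add_val_sub]
      exact ht.1
    · rw [hpK, huJ, add_val_sub, add_val_sub]
      exact ht.1.swap

end TrigonD

section Construction

theorem TrigonDChords.crossing_positions {N : ℕ} [NeZero N] {f : ZMod N → ZMod N}
    (hinv : Function.Involutive f) {i X : ZMod N} {P Q : ℕ} (h : TrigonDChords f i P Q)
    (hX : Crosses f (i + 1) X) (hXin : InArc (i + 1) (f (i + 1)) X) :
    1 < (X - i).val ∧ (X - i).val < P ∧ P + 1 < (f X - i).val ∧ (f X - i).val ≠ Q ∧
      (f X - i).val ≠ Q + 1 := by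
  obtain ⟨hP, hPQ, hQ, hf1, hfP1, hfQ1⟩ := h
  have hff : ∀ x, f (f x) = x := hinv
  -- `f X` is none of `i`, `i + P + 1`, `i + Q`, `i + Q + 1`, as `X` is none of their partners
  have partner : ∀ w, (f X - i).val = (w - i).val → (X - i).val = (f w - i).val := fun w hw => by
    rw [← (val_sub_inj i).1 hw, hff]
  have h0 := partner i
  have hP1 := partner (i + P + 1)
  have hQ0 := partner (i + Q)
  have hQ1 := partner (i + Q + 1)
  rw [show f i = i + Q + 1 by rw [← hff (i + Q + 1), hfQ1]] at h0
  rw [hfP1] at hP1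
  rw [show f (i + Q) = i + P + 1 by rw [← hfP1, hff]] at hQ0
  rw [hfQ1] at hQ1
  rw [hf1, inArc_iff_s13 i] at hXin
  rw [crosses_iff_interleaved f i, hf1] at hX
  have v1 : (i + 1 - i).val = 1 := by simpa using val_add_natCast_sub i (m := 1) (by omega)
  simp (disch := omega) only [val_add_natCast_sub, val_add_natCast_add_one_sub, v1, sub_self,
    val_zero] at hXin hX h0 hP1 hQ0 hQ1
  unfold Interleaved Between Xor at hX
  have := (X - i).val_lt
  have := (f X - i).val_lt
  omega

/-- The chord `{x, Y}` crosses `{1, P}` and exactly one of `{0, Q + 1}`, `{P + 1, Q}`, so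
toggling the crossings of the pairs it crosses leaves exactly one crossing pair. -/
theorem exactlyOne_toggle_of_positions {x Y P Q : ℕ} (hx1 : 1 < x) (hxP : x < P)
    (hPY : P + 1 < Y) (hYQ : Y ≠ Q) (hYQ1 : Y ≠ Q + 1) (hPQ : P + 1 < Q) :
    ExactlyOne
      (Xor (Interleaved 0 (Q + 1) 1 P) (Interleaved x Y 0 (Q + 1) ∧ Interleaved x Y 1 P))
      (Xor (Interleaved 0 (Q + 1) (P + 1) Q)
        (Interleaved x Y 0 (Q + 1) ∧ Interleaved x Y (P + 1) Q))
      (Xor (Interleaved 1 P (P + 1) Q) (Interleaved x Y 1 P ∧ Interleaved x Y (P + 1) Q)) := by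
  have c01 : ¬Interleaved 0 (Q + 1) 1 P := by unfold Interleaved Between Xor; omega
  have c0P : ¬Interleaved 0 (Q + 1) (P + 1) Q := by unfold Interleaved Between Xor; omega
  have c1P : ¬Interleaved 1 P (P + 1) Q := by unfold Interleaved Between Xor; omega
  have cX1 : Interleaved x Y 1 P := by unfold Interleaved Between Xor; omega
  have cX0 : Interleaved x Y 0 (Q + 1) ↔ Q + 1 < Y := by unfold Interleaved Between Xor; omega
  have cXP : Interleaved x Y (P + 1) Q ↔ Y < Q := by unfold Interleaved Between Xor; omega
  simp only [c01, c0P, c1P, cX1, cX0, cXP, xor_false, id, and_true, true_and]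
  unfold ExactlyOne
  omega

theorem TrigonDChords.val_sub {N : ℕ} [NeZero N] {f : ZMod N → ZMod N} {i : ZMod N}
    {P Q : ℕ} (h : TrigonDChords f i P Q) :
    (i + 1 - i).val = 1 ∧ (i + P - i).val = P ∧ (i + P + 1 - i).val = P + 1 ∧
      (i + Q + 1 - i).val = Q + 1 := by
  obtain ⟨hP, hPQ, hQ, -⟩ := h
  exact ⟨by simpa using val_add_natCast_sub i (m := 1) (by omega),
    val_add_natCast_sub i (by omega), val_add_natCast_add_one_sub i (by omega),
    val_add_natCast_add_one_sub i hQ⟩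

variable {n : ℕ} [NeZero n]

theorem TrigonDChords.imoveCorner_eq {f : ZMod (2 * n) → ZMod (2 * n)}
    (hinv : Function.Involutive f) (hfree : ∀ a, f a ≠ a) {i X : ZMod (2 * n)} {P Q : ℕ}
    (h : TrigonDChords f i P Q) (hX : Crosses f (i + 1) X) (hXin : InArc (i + 1) (f (i + 1)) X) :
    imoveCorner n X (f X) i = imoveProj n X (f X) i ∧
      imoveCorner n X (f X) i + 1 = imoveProj n X (f X) (i + 1) ∧
        imoveCorner n X (f X) (i + P) = imoveProj n X (f X) (i + P + 1) := by
  obtain ⟨hx1, hxP, hPY, -, -⟩ := h.crossing_positions hinv hX hXin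
  obtain ⟨v1, vP, vP1, -⟩ := h.val_sub
  have v0 : (i - i).val = 0 := by simp
  have := (f X - i).val_lt
  have d : ∀ {a b : ZMod (2 * n)} {A B : ℕ}, (a - i).val = A → (b - i).val = B → A ≠ B → a ≠ b :=
    fun ha hb hAB => ne_of_val_sub_ne i (by rw [ha, hb]; exact hAB)
  have hpos := fun z => val_sub_eq_ite_of_base i z X
  have ci := imoveCorner_of_not_lt (hfree X) (d v0 rfl (by omega)) (d v0 rfl (by omega))
    (d v1 rfl (by omega)) (d v1 rfl (by omega)) (by rw [hpos, hpos, v0]; split_ifs <;> omega)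
  have cP := imoveCorner_of_lt (hfree X) (d vP rfl (by omega)) (d vP rfl (by omega))
    (d vP1 rfl (by omega)) (d vP1 rfl (by omega)) (by rw [hpos, hpos, vP]; split_ifs <;> omega)
  exact ⟨ci.1, ci.2, cP.1⟩

theorem TrigonDChords.trigonB_imove {f : ZMod (2 * n) → ZMod (2 * n)}
    (hinv : Function.Involutive f) (hfree : ∀ a, f a ≠ a) {i X : ZMod (2 * n)} {P Q : ℕ}
    (h : TrigonDChords f i P Q) (htri : Trigon f i (i + P) (i + Q)) (hX : Crosses f (i + 1) X)
    (hXin : InArc (i + 1) (f (i + 1)) X) :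
    TrigonB (IMove f X) (imoveCorner n X (f X) i) (imoveCorner n X (f X) (i + P))
      (imoveCorner n X (f X) (i + Q)) := by
  obtain ⟨hx1, hxP, hPY, hYQ, hYQ1⟩ := h.crossing_positions hinv hX hXin
  obtain ⟨ci, ci1, cP⟩ := h.imoveCorner_eq hinv hfree hX hXin
  obtain ⟨v1, vP, vP1, vQ1⟩ := h.val_sub
  obtain ⟨hP, hPQ, hQ, hf1, hfP1, hfQ1⟩ := h
  have hff : ∀ x, f (f x) = x := hinv
  have hfi : f i = i + Q + 1 := by rw [← hff (i + Q + 1), hfQ1]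
  have v0 : (i - i).val = 0 := by simp
  have := (f X - i).val_lt
  have d : ∀ {a b : ZMod (2 * n)} {A B : ℕ}, (a - i).val = A → (b - i).val = B → A ≠ B → a ≠ b :=
    fun ha hb hAB => ne_of_val_sub_ne i (by rw [ha, hb]; exact hAB)
  have hXS : X ∉ trigonSet i (i + P) (i + Q) := fun hS => by
    have := val_sub_of_mem_trigonSet htri.1 hS (d rfl v0 (by omega)) (d rfl v1 (by omega))
    simp (disch := omega) only [val_add_natCast_sub] at this
    omega
  have hfXS : f X ∉ trigonSet i (i + P) (i + Q) := fun hS => hXS (hff X ▸ htri.2.1 _ hS)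
  -- the new chords at the corner `imoveCorner n X (f X) i` end at the images of `i + Q + 1` and
  -- `i + P`, so the third chord is the image of `{i + P + 1, i + Q}`
  have hT : trigonThird (IMove f X) (imoveCorner n X (f X) i) (imoveCorner n X (f X) (i + P)) =
      imoveProj n X (f X) (i + P + 1) := by
    rw [trigonThird, ci1, ci, cP, IMove_imoveProj (hfree X) (d v0 rfl (by omega))
      (d v0 rfl (by omega)), IMove_imoveProj (hfree X) (d v1 rfl (by omega))
      (d v1 rfl (by omega)), hfi, hf1, if_neg]
    rintro (e | e)
    · exact d vP1 vQ1 (by omega) (imoveProj_injOn (hfree X) (d vP1 rfl (by omega))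
        (d vP1 rfl (by omega)) (d vQ1 rfl (by omega)) (d vQ1 rfl (by omega)) e)
    · exact d vP1 vP (by omega) (imoveProj_injOn (hfree X) (d vP1 rfl (by omega))
        (d vP1 rfl (by omega)) (d vP rfl (by omega)) (d vP rfl (by omega)) e)
  refine ⟨htri.imove hinv (hfree X) hXS hfXS, ?_⟩
  rw [hT, ci1, ci,
    crosses_IMove hinv (hfree X) (d v0 rfl (by omega)) (d v0 rfl (by omega))
      (d v1 rfl (by omega)) (d v1 rfl (by omega)) (d v1 v0 (by omega))
      (by rw [hfi]; exact d v1 vQ1 (by omega)),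
    crosses_IMove hinv (hfree X) (d v0 rfl (by omega)) (d v0 rfl (by omega))
      (d vP1 rfl (by omega)) (d vP1 rfl (by omega)) (d vP1 v0 (by omega))
      (by rw [hfi]; exact d vP1 vQ1 (by omega)),
    crosses_IMove hinv (hfree X) (d v1 rfl (by omega)) (d v1 rfl (by omega))
      (d vP1 rfl (by omega)) (d vP1 rfl (by omega)) (d vP1 v1 (by omega))
      (by rw [hf1]; exact d vP1 vP (by omega))]
  simp (disch := omega) only [crosses_iff_interleaved f i, hfi, hf1, hfP1, v0, v1,
    val_add_natCast_sub, val_add_natCast_add_one_sub]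
  exact exactlyOne_toggle_of_positions hx1 hxP hPY hYQ hYQ1 hPQ

end Construction

/-- If a chord diagram is not reducible and contains a trigon of type D, then there
exists a chord `p` such that the I-move at `p` produces a chord diagram containing a
trigon of type A or of type B (step in the proof of Lemma 2.6). -/
theorem trigonD_not_reducible_imove_trigonA_or_trigonB {n : ℕ} (hn : 1 ≤ n)
    (f : ZMod (2 * n) → ZMod (2 * n)) (hinv : Function.Involutive f)
    (hfree : ∀ a, f a ≠ a) (hnr : ¬ Reducible f)
    (i j k : ZMod (2 * n)) (ht : TrigonD f i j k) :
    ∃ p : ZMod (2 * n), ∃ i' j' k' : ZMod (2 * (n - 1)),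
      TrigonA (IMove f p) i' j' k' ∨ TrigonB (IMove f p) i' j' k' := by
  have : NeZero n := ⟨by omega⟩
  have : NeZero (2 * n) := ⟨by omega⟩
  obtain ⟨P, Q, hchords, htri⟩ := ht.exists_trigonDChords hinv hfree
  obtain ⟨X, hX, hXin⟩ := exists_crosses_inArc hinv hnr (i + 1)
  exact ⟨X, _, _, _, Or.inr (hchords.trigonB_imove hinv hfree htri hX hXin)⟩

end SphericalCurveReductivity
end
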